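/- arXiv:math-ph/0703032 — 2 statements merged into one kernel-verified Lean document; each statement's English description precedes it below -/
import Mathlib

section
/- For every Schwartz function f on ℝ^d, the distribution (k²−m²)·δ'^±_m satisfies ((k²−m²)·δ'^±_m)(f) = −δ^±_m(f); that is, multiplication of δ'^±_m by the smooth function k ↦ k²−m² yields −δ^±_m. -/
open MeasureTheory

/-!
Write `(k⁰² - ω²) f(k⁰, 𝐤) / (2k⁰)` as `p(k⁰) f(k⁰, 𝐤)` with `p(k⁰) = (k⁰² - ω²) / (2k⁰)`.
On the mass shell `k⁰ = ±ω` the factor `p` vanishes and `p' = 1/2 + ω² / (2k⁰²) = 1`, so by the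
product rule the `k⁰`-derivative there is just `f(±ω, 𝐤)`. The two integrands thus agree pointwise.
-/

theorem HasDerivAt.fun_mul_of_eq_zero {𝕜 𝔸 : Type*} [NontriviallyNormedField 𝕜] [NormedRing 𝔸]
    [NormedAlgebra 𝕜 𝔸] {p g : 𝕜 → 𝔸} {p' : 𝔸} {x : 𝕜}
    (hp : HasDerivAt p p' x) (hpx : p x = 0) (hg : DifferentiableAt 𝕜 g x) :
    HasDerivAt (fun t => p t * g t) (p' * g x) x := by
  simpa [hpx] using hp.fun_mul hg.hasDerivAt

theorem hasDerivAt_sq_sub_div_two_mul {c x : ℝ} (hx : x ≠ 0) (hxc : x ^ 2 = c) :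
    HasDerivAt (fun t => (t ^ 2 - c) / (2 * t)) 1 x := by
  refine (((hasDerivAt_pow 2 x).sub_const c).fun_div
    ((hasDerivAt_id x).const_mul 2) (mul_ne_zero two_ne_zero hx)).congr_deriv ?_
  rw [hxc, id, sub_self, zero_mul, sub_zero]
  field_simp
  ring

theorem deriv_sq_sub_sub_mul_div_two_mul {a b x : ℝ} {F : ℝ → ℂ} (hx : x ≠ 0)
    (hxab : x ^ 2 = a + b) (hF : DifferentiableAt ℝ F x) :
    deriv (fun t : ℝ => ((t ^ 2 - a - b : ℝ) : ℂ) * F t / (2 * (t : ℂ))) x = F x := by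
  have hp : HasDerivAt (fun t : ℝ => (((t ^ 2 - (a + b)) / (2 * t) : ℝ) : ℂ)) 1 x := by
    simpa using (hasDerivAt_sq_sub_div_two_mul hx hxab).ofReal_comp
  have hpx : (((x ^ 2 - (a + b)) / (2 * x) : ℝ) : ℂ) = 0 := by simp [hxab]
  have hfactor : (fun t : ℝ => ((t ^ 2 - a - b : ℝ) : ℂ) * F t / (2 * (t : ℂ))) =
      fun t => (((t ^ 2 - (a + b)) / (2 * t) : ℝ) : ℂ) * F t := by
    funext t
    push_cast
    ring
  rw [hfactor, (hp.fun_mul_of_eq_zero hpx hF).deriv, one_mul]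

theorem stmt1_general (n : ℕ) (m : ℝ) (hm : 0 < m)
    (f : SchwartzMap (ℝ × EuclideanSpace ℝ (Fin n)) ℂ)
    (sgn : ℝ) (hsgn : sgn = 1 ∨ sgn = -1) :
    (-∫ k : EuclideanSpace ℝ (Fin n),
      (1 / (2 * (Real.sqrt (‖k‖ ^ 2 + m ^ 2) : ℂ))) *
        deriv (fun k0 : ℝ =>
          ((k0 ^ 2 - ‖k‖ ^ 2 - m ^ 2 : ℝ) : ℂ) * f (k0, k) / (2 * (k0 : ℂ)))
          (sgn * Real.sqrt (‖k‖ ^ 2 + m ^ 2))) =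
    -(∫ k : EuclideanSpace ℝ (Fin n),
        f (sgn * Real.sqrt (‖k‖ ^ 2 + m ^ 2), k) /
          (2 * (Real.sqrt (‖k‖ ^ 2 + m ^ 2) : ℂ))) := by
  congr 1
  refine integral_congr_ae (Filter.Eventually.of_forall fun k => ?_)
  have hc : 0 < ‖k‖ ^ 2 + m ^ 2 := by positivity
  have hω : 0 < Real.sqrt (‖k‖ ^ 2 + m ^ 2) := Real.sqrt_pos.2 hc
  have hne : sgn * Real.sqrt (‖k‖ ^ 2 + m ^ 2) ≠ 0 := by
    rcases hsgn with rfl | rfl <;> simp [hω.ne']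
  have hsq : (sgn * Real.sqrt (‖k‖ ^ 2 + m ^ 2)) ^ 2 = ‖k‖ ^ 2 + m ^ 2 := by
    rcases hsgn with rfl | rfl <;> simp [Real.sq_sqrt hc.le]
  have hf : DifferentiableAt ℝ (fun t => f (t, k)) (sgn * Real.sqrt (‖k‖ ^ 2 + m ^ 2)) :=
    f.differentiableAt.comp _ (differentiableAt_id.prodMk (differentiableAt_const k))
  beta_reduce
  rw [deriv_sq_sub_sub_mul_div_two_mul hne hsq hf, one_div_mul_eq_div]

/-- Multiplication of `δ'^±_m` by the smooth function `k ↦ k² - m²` yields `-δ^±_m`: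
`((k²-m²)·δ'^±_m)(f) = -δ^±_m(f)` for every Schwartz `f` on `ℝ^d = ℝ × ℝ^{d-1}`,
where `δ^±_m(f) = ∫ f(±ω,𝐤)/(2ω) d𝐤` and
`δ'^±_m(f) = -∫ (1/(2ω)) ∂_{k⁰}[f(k⁰,𝐤)/(2k⁰)]|_{k⁰=±ω} d𝐤`. -/
theorem stmt1 (n : ℕ) (hn : 1 ≤ n) (m : ℝ) (hm : 0 < m)
    (f : SchwartzMap (ℝ × EuclideanSpace ℝ (Fin n)) ℂ)
    (sgn : ℝ) (hsgn : sgn = 1 ∨ sgn = -1) :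
    (-∫ k : EuclideanSpace ℝ (Fin n),
      (1 / (2 * (Real.sqrt (‖k‖ ^ 2 + m ^ 2) : ℂ))) *
        deriv (fun k0 : ℝ =>
          ((k0 ^ 2 - ‖k‖ ^ 2 - m ^ 2 : ℝ) : ℂ) * f (k0, k) / (2 * (k0 : ℂ)))
          (sgn * Real.sqrt (‖k‖ ^ 2 + m ^ 2))) =
    -(∫ k : EuclideanSpace ℝ (Fin n),
        f (sgn * Real.sqrt (‖k‖ ^ 2 + m ^ 2), k) /
          (2 * (Real.sqrt (‖k‖ ^ 2 + m ^ 2) : ℂ))) :=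
  stmt1_general n m hm f sgn hsgn
end

section
/- With χ^d_t(out, k) = [1 − (it/(2k^0))(k²−m²)] (χ^+(k) e^{i(k^0−ω)t} + χ^−(k) e^{i(k^0+ω)t}) as above, the dipole delta is also invariant: for all t ∈ ℝ and Schwartz f, δ'^±_m(χ^d_t(out,·) f) = δ'^±_m(f). The proof uses the Leibniz rule for δ'^±_m = (1/(2k^0)) ∂_0 δ^±_m together with the identity (k²−m²)·δ'^±_m = −δ^±_m to show that all t-dependent terms cancel exactly. -/
open MeasureTheory

/-- `ω(𝐤) = √(|𝐤|² + m²)`. -/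
noncomputable def omegaF {n : ℕ} (m : ℝ) (k : EuclideanSpace ℝ (Fin n)) : ℝ :=
  Real.sqrt (‖k‖ ^ 2 + m ^ 2)

/-- The finite-time "out" dipole multiplier
`χ^d_t(out,k) = [1 - (it/(2k⁰))(k²-m²)]·(χ⁺(k) e^{i(k⁰-ω)t} + χ⁻(k) e^{i(k⁰+ω)t})`
with `χ^±(k) = θ(±k⁰) φ(k²-m²)`, on `ℝ^d = ℝ × ℝ^{d-1}`. -/
noncomputable def chiDOut {n : ℕ} (m t : ℝ) (phi : ℝ → ℝ)
    (k : ℝ × EuclideanSpace ℝ (Fin n)) : ℂ :=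
  (1 - (Complex.I * (t : ℂ) / (2 * (k.1 : ℂ))) * ((k.1 ^ 2 - ‖k.2‖ ^ 2 - m ^ 2 : ℝ) : ℂ)) *
    ((if 0 < k.1 then (1 : ℂ) else 0) * ((phi (k.1 ^ 2 - ‖k.2‖ ^ 2 - m ^ 2) : ℝ) : ℂ) *
        Complex.exp (Complex.I * ((k.1 - omegaF m k.2 : ℝ) : ℂ) * (t : ℂ)) +
      (if k.1 < 0 then (1 : ℂ) else 0) * ((phi (k.1 ^ 2 - ‖k.2‖ ^ 2 - m ^ 2) : ℝ) : ℂ) *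
        Complex.exp (Complex.I * ((k.1 + omegaF m k.2 : ℝ) : ℂ) * (t : ℂ)))

/-- Lemma A.4: invariance of the dipole delta, `χ^d_t(out,·) δ'^±_m = δ'^±_m`, where
`δ'^±_m(f) = -∫ (1/(2ω)) ∂_{k⁰}[f(k⁰,𝐤)/(2k⁰)]|_{k⁰=±ω} d𝐤`; stated without the
overall minus sign on both sides. -/
theorem stmt3 (n : ℕ) (hn : 1 ≤ n) (m ε t : ℝ) (hm : 0 < m)
    (hε : 0 < ε) (hεm : ε < m ^ 2) (phi : ℝ → ℝ) (hphi : ContDiff ℝ (⊤ : ℕ∞) phi)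
    (hsupp : tsupport phi ⊆ Set.Ioo (-ε) ε)
    (hone : ∀ s ∈ Set.Ioo (-(ε / 2)) (ε / 2), phi s = 1)
    (f : SchwartzMap (ℝ × EuclideanSpace ℝ (Fin n)) ℂ)
    (sgn : ℝ) (hsgn : sgn = 1 ∨ sgn = -1) :
    (∫ k : EuclideanSpace ℝ (Fin n),
      (1 / (2 * (omegaF m k : ℂ))) *
        deriv (fun k0 : ℝ => chiDOut m t phi (k0, k) * f (k0, k) / (2 * (k0 : ℂ)))
          (sgn * omegaF m k)) =
    ∫ k : EuclideanSpace ℝ (Fin n),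
      (1 / (2 * (omegaF m k : ℂ))) *
        deriv (fun k0 : ℝ => f (k0, k) / (2 * (k0 : ℂ))) (sgn * omegaF m k) := by
  refine integral_congr_ae (Filter.Eventually.of_forall fun k => ?_)
  dsimp only
  congr 1
  -- setup
  set ω : ℝ := omegaF m k with hωdef
  have hωpos : 0 < ω := Real.sqrt_pos.mpr (by positivity)
  have hω2 : ω ^ 2 = ‖k‖ ^ 2 + m ^ 2 := Real.sq_sqrt (by positivity)
  set a : ℝ := sgn * ω with hadef
  have ha2 : a ^ 2 = ‖k‖ ^ 2 + m ^ 2 := by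
    rcases hsgn with h | h <;> simp [hadef, h, mul_pow, hω2]
  have ha0 : a ≠ 0 := by
    rcases hsgn with h | h <;> simp [hadef, h] <;> exact hωpos.ne'
  -- the complex constants
  set A : ℂ := (a : ℂ) with hAdef
  have hA0 : A ≠ 0 := Complex.ofReal_ne_zero.mpr ha0
  set C : ℂ := ((‖k‖ ^ 2 + m ^ 2 : ℝ) : ℂ) with hCdef
  have hAC : A ^ 2 = C := by
    rw [hAdef, hCdef, ← ha2]; push_cast; ring
  -- the local model function
  set ψ : ℝ → ℂ := fun x =>
    (1 - Complex.I * (t : ℂ) * (((x : ℂ) ^ 2 - C) / (2 * (x : ℂ)))) *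
      Complex.exp (Complex.I * ((x : ℂ) - A) * (t : ℂ)) with hψdef
  -- ψ has value 1 and derivative 0 at a
  have hψa : ψ a = 1 := by
    simp [hψdef, ← hAdef, hAC]
  have hψd : HasDerivAt ψ 0 a := by
    have hnum : HasDerivAt (fun z : ℂ => z ^ 2 - C) (2 * A) A := by
      simpa using (hasDerivAt_pow 2 A).sub_const C
    have hden : HasDerivAt (fun z : ℂ => 2 * z) 2 A := by
      simpa using (hasDerivAt_id A).const_mul (2 : ℂ)
    have hden0 : (2 : ℂ) * A ≠ 0 := by
      exact mul_ne_zero two_ne_zero hA0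
    have hdiv := hnum.div hden hden0
    have hu : HasDerivAt
        (fun z : ℂ => 1 - Complex.I * (t : ℂ) * ((z ^ 2 - C) / (2 * z)))
        (-(Complex.I * (t : ℂ))) A := by
      have := ((hdiv.const_mul (Complex.I * (t : ℂ))).const_sub 1)
      refine this.congr_deriv ?_
      rw [← hAC]
      have h1 : (2 * A * (2 * A) - (A ^ 2 - A ^ 2) * 2) / (2 * A) ^ 2 = (1 : ℂ) := by
        rw [div_eq_iff (pow_ne_zero 2 hden0)]; ring
      rw [h1, mul_one]
    have hin : HasDerivAt (fun z : ℂ => Complex.I * (z - A) * (t : ℂ))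
        (Complex.I * (t : ℂ)) A := by
      simpa using (((hasDerivAt_id A).sub_const A).const_mul Complex.I).mul_const (t : ℂ)
    have hv : HasDerivAt (fun z : ℂ => Complex.exp (Complex.I * (z - A) * (t : ℂ)))
        (Complex.I * (t : ℂ)) A := by
      simpa using hin.cexp
    have hprod := hu.mul hv
    have hC : HasDerivAt
        (fun z : ℂ => (1 - Complex.I * (t : ℂ) * ((z ^ 2 - C) / (2 * z))) *
          Complex.exp (Complex.I * (z - A) * (t : ℂ))) 0 A := by
      refine hprod.congr_deriv ?_
      rw [← hAC]
      simp
    exact hC.comp_ofReal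
  -- f-part differentiability
  have hf : DifferentiableAt ℝ (fun x : ℝ => (f (x, k) : ℂ)) a :=
    (f.differentiable (a, k)).comp a (differentiableAt_id.prodMk (differentiableAt_const k))
  have hden : DifferentiableAt ℝ (fun x : ℝ => (2 * (x : ℂ) : ℂ)) a := by
    have h1 : DifferentiableAt ℝ (fun x : ℝ => ((x : ℝ) : ℂ)) a :=
      Complex.ofRealCLM.differentiable.differentiableAt
    exact h1.const_mul 2
  have hh : DifferentiableAt ℝ (fun x : ℝ => f (x, k) / (2 * (x : ℂ))) a :=
    hf.div hden (by simpa using ha0)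
  -- eventual equality
  have hE1 : ∀ᶠ x in nhds a, phi (x ^ 2 - ‖k‖ ^ 2 - m ^ 2) = 1 := by
    have hc : ContinuousAt (fun x : ℝ => x ^ 2 - ‖k‖ ^ 2 - m ^ 2) a := by fun_prop
    have h0 : (fun x : ℝ => x ^ 2 - ‖k‖ ^ 2 - m ^ 2) a ∈ Set.Ioo (-(ε / 2)) (ε / 2) := by
      simp only [ha2]
      constructor <;> simp <;> linarith
    have := hc.eventually_mem (isOpen_Ioo.mem_nhds h0)
    filter_upwards [this] with x hx using hone _ hx
  have hEq : (fun k0 : ℝ => chiDOut m t phi (k0, k) * f (k0, k) / (2 * (k0 : ℂ)))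
      =ᶠ[nhds a] fun x => ψ x * (f (x, k) / (2 * (x : ℂ))) := by
    rcases hsgn with h | h
    · have hapos : 0 < a := by rw [hadef, h]; simpa using hωpos
      have hE2 : ∀ᶠ x in nhds a, 0 < x := eventually_gt_nhds hapos
      filter_upwards [hE1, hE2] with x hx1 hx2
      have hA : A = (ω : ℂ) := by rw [hAdef, hadef, h]; push_cast; ring
      simp only [chiDOut, hψdef, if_pos hx2, if_neg (asymm hx2), hx1, hA, hCdef, ← hωdef]
      push_cast
      ring
    · have haneg : a < 0 := by rw [hadef, h]; simpa using hωpos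
      have hE2 : ∀ᶠ x in nhds a, x < 0 := eventually_lt_nhds haneg
      filter_upwards [hE1, hE2] with x hx1 hx2
      have hA : A = -(ω : ℂ) := by rw [hAdef, hadef, h]; push_cast; ring
      simp only [chiDOut, hψdef, if_pos hx2, if_neg (asymm hx2), hx1, hA, hCdef, ← hωdef]
      push_cast
      ring
  rw [hEq.deriv_eq, deriv_fun_mul hψd.differentiableAt hh, hψd.deriv, hψa]
  simp
end
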